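/- Let Y₁(x,v,a) = (0,0,2v), Y₂(x,v,a) = (0,v,2a), Y₃(x,v,a) = (v,a,3a²/(2v)) on ℝ³, and let Y_α^[2](p₁,p₂) := (Y_α(p₁), Y_α(p₂)) denote their diagonal prolongations to ℝ⁶, with coordinates (x₁,v₁,a₁,x₂,v₂,a₂). The function F₃(x₁,v₁,a₁,x₂,v₂,a₂) = x₁ + x₂ − 2v₁v₂(v₁ − v₂)/(a₁v₂ − v₁a₂) satisfies (fderiv ℝ F₃ p)(Y_α^[2](p)) = 0 for α = 1,2,3 at every point p with v₁ ≠ 0, v₂ ≠ 0 and a₁v₂ − v₁a₂ ≠ 0. Hence F₃ is a t-independent constant of motion of the diagonal prolongation of the Schwarzian system X_t = Y₃ + b₁(t)Y₁. -/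

import Mathlib

/-- Diagonal prolongations to `ℝ⁶` of the Vessiot--Guldberg vector fields of
the Schwarzian equation; coordinates
`(x₁,v₁,a₁,x₂,v₂,a₂) = (p 0, p 1, p 2, p 3, p 4, p 5)`. -/
noncomputable def schwarzY₁p : (Fin 6 → ℝ) → (Fin 6 → ℝ) :=
  fun p => ![0, 0, 2 * p 1, 0, 0, 2 * p 4]

noncomputable def schwarzY₂p : (Fin 6 → ℝ) → (Fin 6 → ℝ) :=
  fun p => ![0, p 1, 2 * p 2, 0, p 4, 2 * p 5]

noncomputable def schwarzY₃p : (Fin 6 → ℝ) → (Fin 6 → ℝ) :=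
  fun p => ![p 1, p 2, 3 * (p 2) ^ 2 / (2 * p 1),
             p 4, p 5, 3 * (p 5) ^ 2 / (2 * p 4)]

/-- `F₃ = x₁ + x₂ − 2v₁v₂(v₁ − v₂)/(a₁v₂ − v₁a₂)`. -/
noncomputable def schwarzF₃ : (Fin 6 → ℝ) → ℝ :=
  fun p => p 0 + p 3 - 2 * p 1 * p 4 * (p 1 - p 4) / (p 2 * p 4 - p 1 * p 5)

/-!
Write `F₃ = x₁ + x₂ - N / D` with `N = 2 v₁ v₂ (v₁ - v₂)` and `D = a₁ v₂ - v₁ a₂`. The field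
`Y₁` annihilates `N`, `D` and `x₁ + x₂`; `Y₂` annihilates `x₁ + x₂` and, giving `v` weight 1 and
`a` weight 2, scales both `N` and `D` by their common weight 3. Along `Y₃` the sum `x₁ + x₂`
grows at rate `v₁ + v₂`, and `Y₃ D = 3 (a₁ v₂ + v₁ a₂) D / (2 v₁ v₂)` is divisible by `D`,
which makes the quotient rule give `Y₃ (N / D) = v₁ + v₂` as well.
-/

theorem fderiv_div_apply {𝕜 E : Type*} [NontriviallyNormedField 𝕜] [NormedAddCommGroup E]
    [NormedSpace 𝕜 E] {c d : E → 𝕜} {x : E} (hc : DifferentiableAt 𝕜 c x)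
    (hd : DifferentiableAt 𝕜 d x) (hx : d x ≠ 0) (w : E) :
    fderiv 𝕜 (fun y => c y / d y) x w =
      (fderiv 𝕜 c x w * d x - c x * fderiv 𝕜 d x w) / d x ^ 2 := by
  have hinv := (hasDerivAt_inv hx).comp_hasFDerivAt x hd.hasFDerivAt
  have hquot : HasFDerivAt (fun y => c y * (d y)⁻¹) _ x := hc.hasFDerivAt.mul hinv
  simp only [div_eq_mul_inv]
  rw [hquot.fderiv]
  simp only [add_apply, smul_apply, smul_eq_mul, neg_mul, mul_neg]
  field_simp
  ring

namespace Schwarzian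

noncomputable def num (q : Fin 6 → ℝ) : ℝ := 2 * q 1 * q 4 * (q 1 - q 4)

noncomputable def den (q : Fin 6 → ℝ) : ℝ := q 2 * q 4 - q 1 * q 5

theorem differentiable_num : Differentiable ℝ num := by
  unfold num; fun_prop

theorem differentiable_den : Differentiable ℝ den := by
  unfold den; fun_prop

variable {p : Fin 6 → ℝ}

theorem fderiv_num_apply (w : Fin 6 → ℝ) :
    fderiv ℝ num p w =
      2 * (w 1 * p 4 + p 1 * w 4) * (p 1 - p 4) + 2 * p 1 * p 4 * (w 1 - w 4) := by
  unfold num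
  simp (disch := fun_prop) only [fderiv_fun_mul, fderiv_fun_sub, (hasFDerivAt_apply _ p).fderiv,
    fderiv_fun_const, Pi.zero_apply, smul_zero, add_zero, smul_add, add_apply, smul_apply,
    sub_apply, ContinuousLinearMap.proj_apply, smul_eq_mul]
  ring

theorem fderiv_den_apply (w : Fin 6 → ℝ) :
    fderiv ℝ den p w = w 2 * p 4 + p 2 * w 4 - (w 1 * p 5 + p 1 * w 5) := by
  unfold den
  simp (disch := fun_prop) only [fderiv_fun_sub, fderiv_fun_mul, (hasFDerivAt_apply _ p).fderiv,
    sub_apply, add_apply, smul_apply, ContinuousLinearMap.proj_apply, smul_eq_mul]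
  ring

theorem fderiv_schwarzF₃_apply (hD : den p ≠ 0) (w : Fin 6 → ℝ) :
    fderiv ℝ schwarzF₃ p w =
      w 0 + w 3 - (fderiv ℝ num p w * den p - num p * fderiv ℝ den p w) / den p ^ 2 := by
  have hquot : DifferentiableAt ℝ (fun q => num q / den q) p :=
    (differentiable_num p).mul ((differentiable_den p).inv hD)
  change fderiv ℝ (fun q => q 0 + q 3 - num q / den q) p w = _
  rw [fderiv_fun_sub (by fun_prop) hquot, sub_apply,
    fderiv_div_apply (differentiable_num p) (differentiable_den p) hD]
  simp (disch := fun_prop) [fderiv_fun_add, (hasFDerivAt_apply _ p).fderiv]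

theorem fderiv_schwarzF₃_apply_eq_zero (hD : den p ≠ 0) {w : Fin 6 → ℝ}
    (hw : fderiv ℝ num p w * den p - num p * fderiv ℝ den p w = (w 0 + w 3) * den p ^ 2) :
    fderiv ℝ schwarzF₃ p w = 0 := by
  rw [fderiv_schwarzF₃_apply hD, hw]
  field_simp
  ring

theorem fderiv_schwarzF₃_schwarzY₁p (hD : den p ≠ 0) :
    fderiv ℝ schwarzF₃ p (schwarzY₁p p) = 0 := by
  apply fderiv_schwarzF₃_apply_eq_zero hD
  have hN : fderiv ℝ num p (schwarzY₁p p) = 0 := by simp [fderiv_num_apply, schwarzY₁p]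
  have hD' : fderiv ℝ den p (schwarzY₁p p) = 0 := by
    simp only [fderiv_den_apply, schwarzY₁p, Matrix.cons_val_one, Matrix.cons_val_zero,
      Matrix.cons_val]
    ring
  rw [hN, hD']
  simp [schwarzY₁p]

theorem fderiv_schwarzF₃_schwarzY₂p (hD : den p ≠ 0) :
    fderiv ℝ schwarzF₃ p (schwarzY₂p p) = 0 := by
  apply fderiv_schwarzF₃_apply_eq_zero hD
  have hN : fderiv ℝ num p (schwarzY₂p p) = 3 * num p := by
    simp only [fderiv_num_apply, schwarzY₂p, num, Matrix.cons_val_one,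
      Matrix.cons_val_zero, Matrix.cons_val]
    ring
  have hD' : fderiv ℝ den p (schwarzY₂p p) = 3 * den p := by
    simp only [fderiv_den_apply, schwarzY₂p, den, Matrix.cons_val_one,
      Matrix.cons_val_zero, Matrix.cons_val]
    ring
  rw [hN, hD']
  simp only [schwarzY₂p, Matrix.cons_val_zero, Matrix.cons_val]
  ring

theorem fderiv_schwarzF₃_schwarzY₃p (h1 : p 1 ≠ 0) (h4 : p 4 ≠ 0) (hD : den p ≠ 0) :
    fderiv ℝ schwarzF₃ p (schwarzY₃p p) = 0 := by
  apply fderiv_schwarzF₃_apply_eq_zero hD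
  have hN : fderiv ℝ num p (schwarzY₃p p) =
      2 * (p 2 * p 4 + p 1 * p 5) * (p 1 - p 4) + 2 * p 1 * p 4 * (p 2 - p 5) := by
    simp [fderiv_num_apply, schwarzY₃p]
  have hD' : fderiv ℝ den p (schwarzY₃p p) =
      3 * (p 2 * p 4 + p 1 * p 5) * den p / (2 * p 1 * p 4) := by
    simp only [fderiv_den_apply, schwarzY₃p, den, Matrix.cons_val_one, Matrix.cons_val_zero,
      Matrix.cons_val]
    field_simp
    ring
  rw [hN, hD']
  simp only [schwarzY₃p, num, den, Matrix.cons_val_zero, Matrix.cons_val]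
  field_simp
  ring

end Schwarzian

open Schwarzian in
/-- `F₃` is annihilated by the diagonal prolongations of
`Y₁, Y₂, Y₃` wherever `v₁ ≠ 0`, `v₂ ≠ 0` and `a₁v₂ − v₁a₂ ≠ 0`; hence it is
a t-independent constant of motion of the prolonged Schwarzian system. -/
theorem schwarzian_constant_of_motion_F3 :
    ∀ p : Fin 6 → ℝ, p 1 ≠ 0 → p 4 ≠ 0 → p 2 * p 4 - p 1 * p 5 ≠ 0 →
      fderiv ℝ schwarzF₃ p (schwarzY₁p p) = 0 ∧
      fderiv ℝ schwarzF₃ p (schwarzY₂p p) = 0 ∧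
      fderiv ℝ schwarzF₃ p (schwarzY₃p p) = 0 :=
  fun _ h1 h4 hD =>
    ⟨fderiv_schwarzF₃_schwarzY₁p hD, fderiv_schwarzF₃_schwarzY₂p hD,
      fderiv_schwarzF₃_schwarzY₃p h1 h4 hD⟩
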